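/- arXiv:1407.2348 — 7 statements merged into one kernel-verified Lean document; each statement's English description precedes it below -/
import Mathlib

section
/- Let m be a positive even integer. If x ∈ ℝ^n and f : ℝ^n → ℝ is the homogeneous polynomial f(y) = ∑_{i_1,...,i_m} A_{i_1...i_m} y_{i_1}···y_{i_m} given by a symmetric tensor A whose off-'diagonal' entries (those with indices not all equal) are all ≤ 0, and X is a finite sum X = ∑_{j=1}^q (u^j)^{⊗m} of m-th symmetric powers of vectors u^j ∈ ℝ^n, then setting x̄_i = (∑_j (u^j_i)^m)^{1/m} one has ⟨A, x̄^{⊗m}⟩ ≤ ⟨A, X⟩, i.e., f(x̄) ≤ ∑_{i_1,...,i_m} A_{i_1...i_m} X_{i_1...i_m}. -/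
open Finset MvPolynomial

noncomputable section

/-- Entrywise inner product of two m-th order n-dimensional tensors. -/
def tIP {m n : ℕ} (A B : (Fin m → Fin n) → ℝ) : ℝ :=
  ∑ i : Fin m → Fin n, A i * B i

/-- The rank-one tensor `x^{⊗m}` with entries `x_{i_1} ⋯ x_{i_m}`. -/
def rk1 {n : ℕ} (m : ℕ) (x : Fin n → ℝ) : (Fin m → Fin n) → ℝ :=
  fun i => ∏ k, x (i k)

/-- A tensor is symmetric if invariant under permutations of its indices. -/
def TSymm {m n : ℕ} (A : (Fin m → Fin n) → ℝ) : Prop :=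
  ∀ (σ : Equiv.Perm (Fin m)) (i : Fin m → Fin n), A (i ∘ σ) = A i

/-- Essentially nonpositive: entries with indices not all equal are ≤ 0. -/
def EssNonpos {m n : ℕ} (A : (Fin m → Fin n) → ℝ) : Prop :=
  ∀ i : Fin m → Fin n, (¬ ∀ k l, i k = i l) → A i ≤ 0

/-- `U_{m,n}`: convex hull of the rank-one tensors `x^{⊗m}`. -/
def Ucone (m n : ℕ) : Set ((Fin m → Fin n) → ℝ) :=
  convexHull ℝ {X | ∃ x : Fin n → ℝ, X = rk1 m x}

/-- The tensor `P^m A`. -/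
def pmul {m n : ℕ} (P : Matrix (Fin n) (Fin n) ℝ) (A : (Fin m → Fin n) → ℝ) :
    (Fin m → Fin n) → ℝ :=
  fun i => ∑ j : Fin m → Fin n, (∏ k, P (i k) (j k)) * A j

/-- A real-valued function on ℝⁿ is a sum of squares of polynomials. -/
def IsSOSFun {n : ℕ} (f : (Fin n → ℝ) → ℝ) : Prop :=
  ∃ (r : ℕ) (g : Fin r → MvPolynomial (Fin n) ℝ),
    ∀ x, f x = ∑ j, (MvPolynomial.eval x (g j)) ^ 2

/-- A polynomial is a sum of squares of polynomials. -/
def IsSOSPoly {n : ℕ} (f : MvPolynomial (Fin n) ℝ) : Prop :=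
  ∃ (r : ℕ) (g : Fin r → MvPolynomial (Fin n) ℝ), f = ∑ j, (g j) ^ 2

/-- A polynomial has essentially nonpositive coefficients (w.r.t. degree m):
    every coefficient except the constant term and those of `x_i^m` is ≤ 0. -/
def EssNonposCoeff {n : ℕ} (m : ℕ) (f : MvPolynomial (Fin n) ℝ) : Prop :=
  ∀ α : Fin n →₀ ℕ, α ≠ 0 → (∀ i, α ≠ Finsupp.single i m) → f.coeff α ≤ 0


lemma rpow_inv_natpow {m : ℕ} (hm : m ≠ 0) {c : ℝ} (hc : 0 ≤ c) :
    (c ^ ((1 : ℝ) / m)) ^ m = c := by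
  rw [← Real.rpow_natCast (c ^ ((1 : ℝ) / m)) m, ← Real.rpow_mul hc, one_div,
    inv_mul_cancel₀ (by exact_mod_cast hm), Real.rpow_one]

/-- Generalized Hölder for nonnegative reals. -/
lemma holder_aux {m q : ℕ} (hm : m ≠ 0) (a : Fin q → Fin m → ℝ)
    (ha : ∀ j k, 0 ≤ a j k) :
    ∑ j, ∏ k, a j k ≤ ∏ k, (∑ j, a j k ^ m) ^ ((1 : ℝ) / m) := by
  set S : Fin m → ℝ := fun k => ∑ j, a j k ^ m with hS
  have hS0 : ∀ k, 0 ≤ S k := fun k => Finset.sum_nonneg fun j _ => pow_nonneg (ha j k) m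
  set b : Fin m → ℝ := fun k => S k ^ ((1 : ℝ) / m) with hb
  have hb0 : ∀ k, 0 ≤ b k := fun k => Real.rpow_nonneg (hS0 k) _
  by_cases hz : ∃ k, S k = 0
  · obtain ⟨k0, hk0⟩ := hz
    have haz : ∀ j, a j k0 = 0 := by
      intro j
      have := (Finset.sum_eq_zero_iff_of_nonneg (fun j _ => pow_nonneg (ha j k0) m)).1 hk0 j
        (mem_univ j)
      exact pow_eq_zero_iff hm |>.1 this
    have : ∑ j, ∏ k, a j k = 0 := by
      apply Finset.sum_eq_zero; intro j _
      exact Finset.prod_eq_zero (mem_univ k0) (haz j)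
    rw [this]
    exact Finset.prod_nonneg fun k _ => hb0 k
  · push_neg at hz
    have hbpos : ∀ k, 0 < b k := fun k =>
      Real.rpow_pos_of_pos (lt_of_le_of_ne (hS0 k) (Ne.symm (hz k))) _
    have hbm : ∀ k, b k ^ m = S k := fun k => rpow_inv_natpow hm (hS0 k)
    have key : ∑ j, ∏ k, a j k / b k ≤ 1 := by
      have h1 : ∀ j, ∏ k, a j k / b k ≤ ∑ k, (1 / (m : ℝ)) * (a j k / b k) ^ m := by
        intro j
        have := Real.geom_mean_le_arith_mean_weighted univ (fun _ => (1 : ℝ) / m)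
          (fun k => (a j k / b k) ^ m)
          (fun k _ => by positivity)
          (by simp [Finset.card_univ]; field_simp)
          (fun k _ => pow_nonneg (div_nonneg (ha j k) (hb0 k)) m)
        calc ∏ k, a j k / b k = ∏ k, ((a j k / b k) ^ m) ^ ((1 : ℝ) / m) := by
              apply Finset.prod_congr rfl; intro k _
              rw [← Real.rpow_natCast (a j k / b k) m,
                ← Real.rpow_mul (div_nonneg (ha j k) (hb0 k)), one_div,
                mul_inv_cancel₀ (by exact_mod_cast hm), Real.rpow_one]
          _ ≤ _ := this
      calc ∑ j, ∏ k, a j k / b k ≤ ∑ j, ∑ k, (1 / (m : ℝ)) * (a j k / b k) ^ m :=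
            Finset.sum_le_sum fun j _ => h1 j
        _ = ∑ k, (1 / (m : ℝ)) * ((∑ j, a j k ^ m) / b k ^ m) := by
            rw [Finset.sum_comm]
            apply Finset.sum_congr rfl; intro k _
            simp only [div_pow, Finset.sum_div, Finset.mul_sum]
        _ = ∑ k : Fin m, (1 : ℝ) / m := by
            apply Finset.sum_congr rfl; intro k _
            rw [hbm k, div_self (hz k), mul_one]
        _ = 1 := by simp [Finset.card_univ]; field_simp
    have := mul_le_mul_of_nonneg_right key (Finset.prod_nonneg fun k (_ : k ∈ univ) => hb0 k)
    rw [one_mul] at this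
    calc ∑ j, ∏ k, a j k = (∑ j, ∏ k, a j k / b k) * ∏ k, b k := by
          rw [Finset.sum_mul]
          apply Finset.sum_congr rfl; intro j _
          rw [← Finset.prod_mul_distrib]
          apply Finset.prod_congr rfl; intro k _
          rw [div_mul_cancel₀ _ (ne_of_gt (hbpos k))]
      _ ≤ ∏ k, b k := this

/-- Key inequality: `⟨A, x̄^{⊗m}⟩ ≤ ⟨A, X⟩` for essentially nonpositive symmetric `A`
and `X = ∑ (u^j)^{⊗m}`, with `x̄_i = (∑_j (u^j_i)^m)^{1/m}`. -/
theorem stmt1 (m n q : ℕ) (hm : Even m) (hm0 : 0 < m)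
    (A : (Fin m → Fin n) → ℝ) (hA : TSymm A) (hEN : EssNonpos A)
    (u : Fin q → Fin n → ℝ) :
    tIP A (rk1 m (fun i => (∑ j : Fin q, u j i ^ m) ^ ((1 : ℝ) / m))) ≤
      tIP A (∑ j : Fin q, rk1 m (u j)) := by
  unfold tIP
  apply Finset.sum_le_sum
  intro i _
  have hsum : (∑ j : Fin q, rk1 m (u j)) i = ∑ j : Fin q, ∏ k, u j (i k) := by
    simp [rk1]
  rw [hsum]
  set k0 : Fin m := ⟨0, hm0⟩
  by_cases h : ∀ k l, i k = i l
  · apply le_of_eq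
    congr 1
    have h1 : rk1 m (fun i => (∑ j : Fin q, u j i ^ m) ^ ((1 : ℝ) / m)) i
        = ((∑ j : Fin q, u j (i k0) ^ m) ^ ((1 : ℝ) / m)) ^ m := by
      unfold rk1
      rw [Finset.prod_congr rfl (fun k _ => by rw [h k k0]), Finset.prod_const,
        Finset.card_univ, Fintype.card_fin]
    rw [h1, rpow_inv_natpow hm0.ne' (Finset.sum_nonneg fun j _ => hm.pow_nonneg _)]
    apply Finset.sum_congr rfl; intro j _
    rw [Finset.prod_congr rfl (fun k _ => by rw [h k k0]), Finset.prod_const,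
      Finset.card_univ, Fintype.card_fin]
  · apply mul_le_mul_of_nonpos_left _ (hEN i h)
    unfold rk1
    calc ∑ j : Fin q, ∏ k, u j (i k) ≤ ∑ j : Fin q, ∏ k, |u j (i k)| := by
          apply Finset.sum_le_sum; intro j _
          rw [← Finset.abs_prod]
          exact le_abs_self _
      _ ≤ ∏ k, (∑ j : Fin q, |u j (i k)| ^ m) ^ ((1 : ℝ) / m) :=
          holder_aux hm0.ne' (fun j k => |u j (i k)|) (fun j k => abs_nonneg _)
      _ = ∏ k, (∑ j : Fin q, u j (i k) ^ m) ^ ((1 : ℝ) / m) := by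
          apply Finset.prod_congr rfl; intro k _
          congr 1
          exact Finset.sum_congr rfl fun j _ => hm.pow_abs _
end
end

section
/- Let m be even, n, p ∈ ℕ, and let F_0,...,F_p be essentially nonpositive symmetric m-th order n-dimensional tensors. Then the following are equivalent: (i) there exists x ∈ ℝ^n with ⟨F_l, x^{⊗m}⟩ < 0 for all l = 0,...,p; (ii) there exists X ∈ U_{m,n} = conv{x^{⊗m} : x ∈ ℝ^n} with ⟨F_l, X⟩ < 0 for all l = 0,...,p. -/
open Finset MvPolynomial

noncomputable section

/-- AM-GM with equal weights. -/
lemma amgm_pow {m : ℕ} (hm0 : 0 < m) (c : Fin m → ℝ) (hc : ∀ k, 0 ≤ c k) :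
    ∏ k, c k ≤ (m : ℝ)⁻¹ * ∑ k, c k ^ m := by
  have hmR : ((m:ℝ)) ≠ 0 := by exact_mod_cast hm0.ne'
  have h := Real.geom_mean_le_arith_mean_weighted Finset.univ
    (fun _ : Fin m => (m:ℝ)⁻¹) (fun k => c k ^ m)
    (fun i _ => inv_nonneg.2 (Nat.cast_nonneg m))
    (by simp [Finset.card_univ]; field_simp)
    (fun i _ => pow_nonneg (hc i) m)
  have hL : ∀ k : Fin m, ((c k ^ m) ^ ((m:ℝ)⁻¹) : ℝ) = c k := fun k =>
    Real.pow_rpow_inv_natCast (hc k) hm0.ne'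
  calc ∏ k, c k = ∏ k, ((c k ^ m) ^ ((m:ℝ)⁻¹) : ℝ) :=
        Finset.prod_congr rfl fun k _ => (hL k).symm
    _ ≤ ∑ k, (m:ℝ)⁻¹ * c k ^ m := h
    _ = (m:ℝ)⁻¹ * ∑ k, c k ^ m := by rw [Finset.mul_sum]

/-- Weighted generalized Hölder inequality. -/
lemma holder_weighted {ι : Type} [Fintype ι] {m : ℕ} (hm0 : 0 < m)
    (w : ι → ℝ) (hw : ∀ t, 0 ≤ w t) (a : ι → Fin m → ℝ) (ha : ∀ t k, 0 ≤ a t k) :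
    ∑ t, w t * ∏ k, a t k ≤ ∏ k, (∑ t, w t * a t k ^ m) ^ ((m:ℝ)⁻¹) := by
  set S : Fin m → ℝ := fun k => ∑ t, w t * a t k ^ m with hSdef
  have hS : ∀ k, 0 ≤ S k := fun k =>
    Finset.sum_nonneg fun t _ => mul_nonneg (hw t) (pow_nonneg (ha t k) m)
  set b : Fin m → ℝ := fun k => (S k) ^ ((m:ℝ)⁻¹) with hbdef
  have hb : ∀ k, 0 ≤ b k := fun k => Real.rpow_nonneg (hS k) _
  have hbm : ∀ k, b k ^ m = S k := fun k =>
    Real.rpow_inv_natCast_pow (hS k) hm0.ne'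
  by_cases hzero : ∃ k0, S k0 = 0
  · obtain ⟨k0, hk0⟩ := hzero
    have hterm : ∀ t, w t * a t k0 ^ m = 0 := fun t =>
      (Finset.sum_eq_zero_iff_of_nonneg
        (fun t _ => mul_nonneg (hw t) (pow_nonneg (ha t k0) m))).1 hk0 t (Finset.mem_univ t)
    have hL : ∑ t, w t * ∏ k, a t k = 0 := by
      apply Finset.sum_eq_zero
      intro t _
      rcases mul_eq_zero.1 (hterm t) with h | h
      · simp [h]
      · rw [Finset.prod_eq_zero (Finset.mem_univ k0) (pow_eq_zero_iff hm0.ne' |>.1 h), mul_zero]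
    rw [hL]
    exact Finset.prod_nonneg fun k _ => hb k
  · push_neg at hzero
    have hSpos : ∀ k, 0 < S k := fun k => (hS k).lt_of_ne' (hzero k)
    have hbpos : ∀ k, 0 < b k := fun k => Real.rpow_pos_of_pos (hSpos k) _
    have step1 : ∀ t, w t * ∏ k, a t k ≤
        w t * ((∏ k, b k) * ((m:ℝ)⁻¹ * ∑ k, (a t k / b k) ^ m)) := by
      intro t
      apply mul_le_mul_of_nonneg_left _ (hw t)
      have hfac : ∏ k, a t k = (∏ k, b k) * ∏ k, (a t k / b k) := by
        rw [← Finset.prod_mul_distrib]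
        exact Finset.prod_congr rfl fun k _ => by
          rw [mul_comm, div_mul_cancel₀ _ (hbpos k).ne']
      rw [hfac]
      exact mul_le_mul_of_nonneg_left
        (amgm_pow hm0 _ fun k => div_nonneg (ha t k) (hb k))
        (Finset.prod_nonneg fun k _ => hb k)
    have hT : ∑ t, w t * ∑ k, (a t k / b k) ^ m = (m:ℝ) := by
      have h1 : ∀ t, w t * ∑ k, (a t k / b k) ^ m
          = ∑ k, w t * a t k ^ m / b k ^ m := by
        intro t
        rw [Finset.mul_sum]
        exact Finset.sum_congr rfl fun k _ => by rw [div_pow]; ring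
      rw [Finset.sum_congr rfl fun t _ => h1 t, Finset.sum_comm]
      have h2 : ∀ k : Fin m, ∑ t, w t * a t k ^ m / b k ^ m = 1 := by
        intro k
        rw [← Finset.sum_div, hbm k]
        exact div_self (hSpos k).ne'
      rw [Finset.sum_congr rfl fun k _ => h2 k]
      simp
    calc ∑ t, w t * ∏ k, a t k
        ≤ ∑ t, w t * ((∏ k, b k) * ((m:ℝ)⁻¹ * ∑ k, (a t k / b k) ^ m)) :=
          Finset.sum_le_sum fun t _ => step1 t
      _ = (∏ k, b k) * ((m:ℝ)⁻¹ * ∑ t, w t * ∑ k, (a t k / b k) ^ m) := by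
          simp only [Finset.mul_sum]
          exact Finset.sum_congr rfl fun t _ =>
            Finset.sum_congr rfl fun k _ => by ring
      _ = ∏ k, b k := by
          rw [hT]
          have hmR : ((m:ℝ)) ≠ 0 := by exact_mod_cast hm0.ne'
          field_simp

/-- Hidden convexity equivalence: strict feasibility over rank-one tensors iff
strict feasibility over `U_{m,n}`. -/
theorem stmt7 (m n p : ℕ) (hm : Even m) (hm0 : 0 < m)
    (F : Fin (p + 1) → (Fin m → Fin n) → ℝ)
    (hFs : ∀ l, TSymm (F l)) (hEN : ∀ l, EssNonpos (F l)) :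
    (∃ x : Fin n → ℝ, ∀ l, tIP (F l) (rk1 m x) < 0) ↔
      (∃ X ∈ Ucone m n, ∀ l, tIP (F l) X < 0) := by
  constructor
  · rintro ⟨x, hx⟩
    exact ⟨rk1 m x, subset_convexHull ℝ _ ⟨x, rfl⟩, hx⟩
  · rintro ⟨X, hX, hlt⟩
    rw [Ucone, mem_convexHull_iff_exists_fintype] at hX
    obtain ⟨ι, _, w, z, hw0, hw1, hz, hXeq⟩ := hX
    choose y hy using hz
    have hXi : ∀ i, X i = ∑ t, w t * ∏ k, y t (i k) := by
      intro i
      rw [← hXeq, Finset.sum_apply]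
      exact Finset.sum_congr rfl fun t _ => by
        rw [hy t]; simp [rk1]
    set a : ι → Fin n → ℝ := fun t j => |y t j| with hadef
    have ham : ∀ t j, a t j ^ m = y t j ^ m := fun t j => hm.pow_abs _
    set xb : Fin n → ℝ := fun j => (∑ t, w t * a t j ^ m) ^ ((m:ℝ)⁻¹) with hxbdef
    refine ⟨xb, fun l => ?_⟩
    have key : tIP (F l) (rk1 m xb) ≤ tIP (F l) X := by
      unfold tIP rk1
      apply Finset.sum_le_sum
      intro i _
      by_cases hdiag : ∀ k k', i k = i k'
      · have hconst : ∀ k, i k = i ⟨0, hm0⟩ := fun k => hdiag k _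
        have hSnn : 0 ≤ ∑ t, w t * a t (i ⟨0, hm0⟩) ^ m :=
          Finset.sum_nonneg fun t _ => mul_nonneg (hw0 t) (pow_nonneg (abs_nonneg _) m)
        have h1 : ∏ k, xb (i k) = X i := by
          have e1 : ∏ k : Fin m, xb (i k) = xb (i ⟨0, hm0⟩) ^ m := by
            rw [Finset.prod_congr rfl fun k _ => congrArg xb (hconst k)]
            simp
          have e2 : xb (i ⟨0, hm0⟩) ^ m = ∑ t, w t * y t (i ⟨0, hm0⟩) ^ m := by
            rw [hxbdef]
            rw [Real.rpow_inv_natCast_pow hSnn hm0.ne']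
            exact Finset.sum_congr rfl fun t _ => by rw [ham]
          have e3 : X i = ∑ t, w t * y t (i ⟨0, hm0⟩) ^ m := by
            rw [hXi i]
            refine Finset.sum_congr rfl fun t _ => ?_
            congr 1
            rw [Finset.prod_congr rfl fun k _ => congrArg (y t) (hconst k)]
            simp
          rw [e1, e2, e3]
        rw [h1]
      · have hF := hEN l i hdiag
        have h2 : X i ≤ ∏ k, xb (i k) := by
          rw [hXi i]
          calc ∑ t, w t * ∏ k, y t (i k) ≤ ∑ t, w t * ∏ k, a t (i k) := by
                apply Finset.sum_le_sum
                intro t _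
                apply mul_le_mul_of_nonneg_left _ (hw0 t)
                calc ∏ k, y t (i k) ≤ |∏ k, y t (i k)| := le_abs_self _
                  _ = ∏ k, |y t (i k)| := Finset.abs_prod _ _
            _ ≤ ∏ k, (∑ t, w t * a t (i k) ^ m) ^ ((m:ℝ)⁻¹) :=
                holder_weighted hm0 w hw0 (fun t k => a t (i k))
                  (fun t k => abs_nonneg _)
            _ = ∏ k, xb (i k) := rfl
        exact mul_le_mul_of_nonpos_left h2 hF
    exact key.trans_lt (hlt l)
end
end

section
/- Let m be even and F_0,...,F_p essentially nonpositive symmetric m-th order n-dimensional tensors. Then the set M = {(⟨F_0, x^{⊗m}⟩,...,⟨F_p, x^{⊗m}⟩) : x ∈ ℝ^n} + int ℝ^{p+1}_+ equals {(⟨F_0, X⟩,...,⟨F_p, X⟩) : X ∈ U_{m,n}} + int ℝ^{p+1}_+, and in particular M is a convex cone in ℝ^{p+1}. -/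
open Finset MvPolynomial

noncomputable section

/-- m-factor weighted Hölder inequality. -/
lemma holder_aux_s8 {ι : Type} (t : Finset ι) (m : ℕ) (hm0 : 0 < m)
    (w : ι → ℝ) (a : ι → Fin m → ℝ)
    (hw : ∀ j ∈ t, 0 ≤ w j) (ha : ∀ j k, 0 ≤ a j k)
    (b : Fin m → ℝ) (hb : ∀ k, 0 ≤ b k)
    (hbm : ∀ k, b k ^ m = ∑ j ∈ t, w j * a j k ^ m) :
    ∑ j ∈ t, w j * ∏ k, a j k ≤ ∏ k, b k := by
  by_cases hz : ∃ k, b k = 0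
  · obtain ⟨k0, hk0⟩ := hz
    have h0 : ∑ j ∈ t, w j * a j k0 ^ m = 0 := by
      rw [← hbm, hk0, zero_pow hm0.ne']
    have hterm : ∀ j ∈ t, w j * a j k0 ^ m = 0 := by
      intro j hj
      have := (Finset.sum_eq_zero_iff_of_nonneg (fun j hj =>
        mul_nonneg (hw j hj) (pow_nonneg (ha j k0) m))).mp h0 j hj
      exact this
    have hL : ∑ j ∈ t, w j * ∏ k, a j k = 0 := by
      refine Finset.sum_eq_zero fun j hj => ?_
      rcases mul_eq_zero.mp (hterm j hj) with h | h
      · simp [h]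
      · have : a j k0 = 0 := pow_eq_zero_iff hm0.ne' |>.mp h
        rw [Finset.prod_eq_zero (Finset.mem_univ k0) this, mul_zero]
    rw [hL]
    exact Finset.prod_nonneg fun k _ => hb k
  · push_neg at hz
    have hbpos : ∀ k, 0 < b k := fun k => (hb k).lt_of_ne' (hz k)
    have hProd : 0 < ∏ k, b k := Finset.prod_pos fun k _ => hbpos k
    -- AM-GM per j
    have key : ∀ j ∈ t, ∏ k, a j k / b k ≤ ∑ k : Fin m, (1 / (m:ℝ)) * (a j k / b k) ^ m := by
      intro j _
      have := Real.geom_mean_le_arith_mean_weighted Finset.univ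
        (fun _ : Fin m => 1 / (m:ℝ)) (fun k => (a j k / b k) ^ m)
        (fun k _ => by positivity) (by
          simp [Finset.sum_const, Finset.card_univ]
          field_simp)
        (fun k _ => pow_nonneg (div_nonneg (ha j k) (hb k)) m)
      calc ∏ k, a j k / b k
          = ∏ k : Fin m, ((a j k / b k) ^ m) ^ ((1:ℝ) / m) := by
            refine Finset.prod_congr rfl fun k _ => ?_
            rw [← Real.rpow_natCast (a j k / b k) m, ← Real.rpow_mul
              (div_nonneg (ha j k) (hb k))]
            rw [mul_one_div, div_self (by exact_mod_cast hm0.ne')]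
            exact (Real.rpow_one _).symm
        _ ≤ ∑ k : Fin m, (1 / (m:ℝ)) * (a j k / b k) ^ m := this
    have step : ∑ j ∈ t, w j * ∏ k, a j k / b k ≤ 1 := by
      calc ∑ j ∈ t, w j * ∏ k, a j k / b k
          ≤ ∑ j ∈ t, w j * ∑ k : Fin m, (1 / (m:ℝ)) * (a j k / b k) ^ m :=
            Finset.sum_le_sum fun j hj => mul_le_mul_of_nonneg_left (key j hj) (hw j hj)
        _ = ∑ k : Fin m, (1 / (m:ℝ)) * ((∑ j ∈ t, w j * a j k ^ m) / b k ^ m) := by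
            simp only [Finset.mul_sum, Finset.sum_div]
            rw [Finset.sum_comm]
            refine Finset.sum_congr rfl fun k _ => Finset.sum_congr rfl fun j _ => ?_
            rw [div_pow]; ring
        _ = 1 := by
            have : ∀ k : Fin m, (1 / (m:ℝ)) * ((∑ j ∈ t, w j * a j k ^ m) / b k ^ m)
                = 1 / (m:ℝ) := by
              intro k
              rw [← hbm, div_self (pow_pos (hbpos k) m).ne', mul_one]
            rw [Finset.sum_congr rfl fun k _ => this k]
            simp [Finset.sum_const, Finset.card_univ]
            field_simp
    have : ∑ j ∈ t, w j * ∏ k, a j k = (∑ j ∈ t, w j * ∏ k, a j k / b k) * ∏ k, b k := by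
      rw [Finset.sum_mul]
      refine Finset.sum_congr rfl fun j _ => ?_
      rw [mul_assoc, Finset.prod_div_distrib, div_mul_cancel₀ _ hProd.ne']
    rw [this]
    calc (∑ j ∈ t, w j * ∏ k, a j k / b k) * ∏ k, b k ≤ 1 * ∏ k, b k :=
        mul_le_mul_of_nonneg_right step hProd.le
      _ = ∏ k, b k := one_mul _

/-- tIP is linear in the second slot for combinations. -/
lemma tIP_comb {m n : ℕ} (A : (Fin m → Fin n) → ℝ) (X Y : (Fin m → Fin n) → ℝ) (a b : ℝ) :
    tIP A (a • X + b • Y) = a * tIP A X + b * tIP A Y := by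
  simp only [tIP, Pi.add_apply, Pi.smul_apply, smul_eq_mul, Finset.mul_sum,
    ← Finset.sum_add_distrib]
  exact Finset.sum_congr rfl fun i _ => by ring

/-- Key lemma: relaxing over `Ucone` doesn't enlarge the shifted range. -/
lemma key_lemma {m n : ℕ} (hm : Even m) (hm0 : 0 < m) {q : ℕ}
    (F : Fin q → (Fin m → Fin n) → ℝ) (hEN : ∀ l, EssNonpos (F l))
    (X : (Fin m → Fin n) → ℝ) (hX : X ∈ Ucone m n) :
    ∃ y : Fin n → ℝ, ∀ l, tIP (F l) (rk1 m y) ≤ tIP (F l) X := by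
  rw [Ucone, _root_.convexHull_eq] at hX
  obtain ⟨ι, t, w, z, hw, hw1, hz, hXc⟩ := hX
  rw [Finset.centerMass_eq_of_sum_1 _ _ hw1] at hXc
  -- choose representatives
  have hx : ∀ j ∈ t, ∃ x : Fin n → ℝ, z j = rk1 m x := fun j hj => hz j hj
  classical
  set x : ι → Fin n → ℝ := fun j =>
    if h : ∃ x : Fin n → ℝ, z j = rk1 m x then h.choose else 0 with hxdef
  have hzx : ∀ j ∈ t, z j = rk1 m (x j) := by
    intro j hj
    have h := hx j hj
    simp only [hxdef, dif_pos h]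
    exact h.choose_spec
  set S : Fin n → ℝ := fun i => ∑ j ∈ t, w j * (x j i) ^ m with hSdef
  have hS0 : ∀ i, 0 ≤ S i := fun i =>
    Finset.sum_nonneg fun j hj => mul_nonneg (hw j hj) (hm.pow_nonneg _)
  set y : Fin n → ℝ := fun i => (S i) ^ ((1:ℝ)/m) with hydef
  have hy0 : ∀ i, 0 ≤ y i := fun i => Real.rpow_nonneg (hS0 i) _
  have hym : ∀ i, y i ^ m = S i := by
    intro i
    rw [hydef]
    rw [← Real.rpow_natCast ((S i) ^ ((1:ℝ)/m)) m, ← Real.rpow_mul (hS0 i),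
      one_div_mul_cancel (by exact_mod_cast hm0.ne'), Real.rpow_one]
  refine ⟨y, fun l => ?_⟩
  -- reduce to pointwise inequality
  have hXi : ∀ i, X i = ∑ j ∈ t, w j * rk1 m (x j) i := by
    intro i
    rw [← hXc]
    rw [Finset.sum_apply]
    exact Finset.sum_congr rfl fun j hj => by rw [Pi.smul_apply, smul_eq_mul, hzx j hj]
  unfold tIP
  refine Finset.sum_le_sum fun i _ => ?_
  by_cases hall : ∀ k k', i k = i k'
  · -- diagonal entry: equality
    have hc : ∀ k, i k = i ⟨0, hm0⟩ := fun k => hall k _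
    have h1 : rk1 m y i = S (i ⟨0, hm0⟩) := by
      unfold rk1
      calc ∏ k, y (i k) = ∏ _k : Fin m, y (i ⟨0, hm0⟩) :=
            Finset.prod_congr rfl fun k _ => by rw [hc k]
        _ = y (i ⟨0, hm0⟩) ^ m := by
            rw [Finset.prod_const, Finset.card_univ, Fintype.card_fin]
        _ = S (i ⟨0, hm0⟩) := hym _
    have h2 : X i = S (i ⟨0, hm0⟩) := by
      rw [hXi i, hSdef]
      refine Finset.sum_congr rfl fun j hj => ?_
      congr 1
      unfold rk1
      calc ∏ k, x j (i k) = ∏ _k : Fin m, x j (i ⟨0, hm0⟩) :=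
            Finset.prod_congr rfl fun k _ => by rw [hc k]
        _ = x j (i ⟨0, hm0⟩) ^ m := by
            rw [Finset.prod_const, Finset.card_univ, Fintype.card_fin]
    rw [h1, h2]
  · -- off-diagonal: F l i ≤ 0 and rk1 m y i ≥ X i
    have hF : F l i ≤ 0 := hEN l i hall
    have hge : X i ≤ rk1 m y i := by
      rw [hXi i]
      calc ∑ j ∈ t, w j * rk1 m (x j) i
          ≤ ∑ j ∈ t, w j * ∏ k, |x j (i k)| := by
            refine Finset.sum_le_sum fun j hj => mul_le_mul_of_nonneg_left ?_ (hw j hj)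
            calc rk1 m (x j) i ≤ |rk1 m (x j) i| := le_abs_self _
              _ = ∏ k, |x j (i k)| := by rw [rk1, Finset.abs_prod]
        _ ≤ ∏ k, y (i k) := by
            refine holder_aux_s8 t m hm0 w (fun j k => |x j (i k)|) hw
              (fun j k => abs_nonneg _) (fun k => y (i k)) (fun k => hy0 _) ?_
            intro k
            rw [hym]
            exact Finset.sum_congr rfl fun j _ => by rw [hm.pow_abs]
        _ = rk1 m y i := rfl
    exact mul_le_mul_of_nonpos_left hge hF

lemma tIP_smul {m n : ℕ} (A X : (Fin m → Fin n) → ℝ) (c : ℝ) :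
    tIP A (c • X) = c * tIP A X := by
  simp only [tIP, Pi.smul_apply, smul_eq_mul, Finset.mul_sum]
  exact Finset.sum_congr rfl fun i _ => by ring

theorem stmt8' (m n p : ℕ) (hm : Even m) (hm0 : 0 < m)
    (F : Fin (p + 1) → (Fin m → Fin n) → ℝ)
    (hEN : ∀ l, EssNonpos (F l)) :
    {v : Fin (p + 1) → ℝ | ∃ (x : Fin n → ℝ) (w : Fin (p + 1) → ℝ),
        (∀ l, 0 < w l) ∧ v = (fun l => tIP (F l) (rk1 m x)) + w} =
      {v : Fin (p + 1) → ℝ | ∃ X ∈ Ucone m n, ∃ w : Fin (p + 1) → ℝ,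
        (∀ l, 0 < w l) ∧ v = (fun l => tIP (F l) X) + w} ∧
    Convex ℝ {v : Fin (p + 1) → ℝ | ∃ (x : Fin n → ℝ) (w : Fin (p + 1) → ℝ),
        (∀ l, 0 < w l) ∧ v = (fun l => tIP (F l) (rk1 m x)) + w} ∧
    (∀ c : ℝ, 0 < c →
      ∀ v ∈ {v : Fin (p + 1) → ℝ | ∃ (x : Fin n → ℝ) (w : Fin (p + 1) → ℝ),
        (∀ l, 0 < w l) ∧ v = (fun l => tIP (F l) (rk1 m x)) + w},
      c • v ∈ {v : Fin (p + 1) → ℝ | ∃ (x : Fin n → ℝ) (w : Fin (p + 1) → ℝ),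
        (∀ l, 0 < w l) ∧ v = (fun l => tIP (F l) (rk1 m x)) + w}) := by
  have hmemU : ∀ x : Fin n → ℝ, rk1 m x ∈ Ucone m n := fun x =>
    subset_convexHull ℝ _ ⟨x, rfl⟩
  have hAB : {v : Fin (p + 1) → ℝ | ∃ (x : Fin n → ℝ) (w : Fin (p + 1) → ℝ),
        (∀ l, 0 < w l) ∧ v = (fun l => tIP (F l) (rk1 m x)) + w} =
      {v : Fin (p + 1) → ℝ | ∃ X ∈ Ucone m n, ∃ w : Fin (p + 1) → ℝ,
        (∀ l, 0 < w l) ∧ v = (fun l => tIP (F l) X) + w} := by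
    ext v
    constructor
    · rintro ⟨x, w, hw, rfl⟩
      exact ⟨rk1 m x, hmemU x, w, hw, rfl⟩
    · rintro ⟨X, hX, w, hw, rfl⟩
      obtain ⟨y, hy⟩ := key_lemma hm hm0 F hEN X hX
      refine ⟨y, fun l => w l + (tIP (F l) X - tIP (F l) (rk1 m y)),
        fun l => by have := hy l; have := hw l; simp only []; linarith, ?_⟩
      funext l
      simp only [Pi.add_apply]
      ring
  refine ⟨hAB, ?_, ?_⟩
  · rw [hAB]
    rintro v1 ⟨X1, hX1, w1, hw1, rfl⟩ v2 ⟨X2, hX2, w2, hw2, rfl⟩ a b ha hb hab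
    rcases ha.eq_or_lt with rfl | ha'
    · have hb1 : b = 1 := by linarith
      simpa [hb1] using ⟨X2, hX2, w2, hw2, rfl⟩
    rcases hb.eq_or_lt with rfl | hb'
    · have ha1 : a = 1 := by linarith
      simpa [ha1] using ⟨X1, hX1, w1, hw1, rfl⟩
    refine ⟨a • X1 + b • X2, (convex_convexHull ℝ _) hX1 hX2 ha hb hab,
      fun l => a * w1 l + b * w2 l,
      fun l => add_pos (mul_pos ha' (hw1 l)) (mul_pos hb' (hw2 l)), ?_⟩
    funext l
    simp only [Pi.add_apply, Pi.smul_apply, smul_eq_mul, tIP_comb]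
    ring
  · intro c hc v hv
    obtain ⟨x, w, hw, rfl⟩ := hv
    have hsm : (c ^ ((1:ℝ)/m)) ^ m = c := by
      rw [← Real.rpow_natCast (c ^ ((1:ℝ)/m)) m, ← Real.rpow_mul hc.le,
        one_div_mul_cancel (by exact_mod_cast hm0.ne'), Real.rpow_one]
    have hr : rk1 m ((c ^ ((1:ℝ)/m)) • x) = c • rk1 m x := by
      funext i
      simp only [rk1, Pi.smul_apply, smul_eq_mul]
      rw [Finset.prod_mul_distrib, Finset.prod_const, Finset.card_univ,
        Fintype.card_fin, hsm]
    refine ⟨(c ^ ((1:ℝ)/m)) • x, fun l => c * w l, fun l => mul_pos hc (hw l), ?_⟩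
    funext l
    simp only [Pi.add_apply, Pi.smul_apply, smul_eq_mul, hr, tIP_smul]
    ring


/-- Hidden convexity: `M` equals its convexified version and is a convex cone. -/
theorem stmt8 (m n p : ℕ) (hm : Even m) (hm0 : 0 < m)
    (F : Fin (p + 1) → (Fin m → Fin n) → ℝ)
    (hFs : ∀ l, TSymm (F l)) (hEN : ∀ l, EssNonpos (F l)) :
    {v : Fin (p + 1) → ℝ | ∃ (x : Fin n → ℝ) (w : Fin (p + 1) → ℝ),
        (∀ l, 0 < w l) ∧ v = (fun l => tIP (F l) (rk1 m x)) + w} =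
      {v : Fin (p + 1) → ℝ | ∃ X ∈ Ucone m n, ∃ w : Fin (p + 1) → ℝ,
        (∀ l, 0 < w l) ∧ v = (fun l => tIP (F l) X) + w} ∧
    Convex ℝ {v : Fin (p + 1) → ℝ | ∃ (x : Fin n → ℝ) (w : Fin (p + 1) → ℝ),
        (∀ l, 0 < w l) ∧ v = (fun l => tIP (F l) (rk1 m x)) + w} ∧
    (∀ c : ℝ, 0 < c →
      ∀ v ∈ {v : Fin (p + 1) → ℝ | ∃ (x : Fin n → ℝ) (w : Fin (p + 1) → ℝ),
        (∀ l, 0 < w l) ∧ v = (fun l => tIP (F l) (rk1 m x)) + w},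
      c • v ∈ {v : Fin (p + 1) → ℝ | ∃ (x : Fin n → ℝ) (w : Fin (p + 1) → ℝ),
        (∀ l, 0 < w l) ∧ v = (fun l => tIP (F l) (rk1 m x)) + w}) :=
  stmt8' m n p hm hm0 F hEN
end
end

section
/- (Matrix case / Corollary) Let A_0, A_1,...,A_p be real symmetric n×n matrices and suppose there is a nonsingular matrix Q such that QᵀA_lQ has nonpositive off-diagonal entries for every l. Then exactly one of the following holds: (i) there is x ∈ ℝ^n with xᵀA_lx < 0 for all l = 0,...,p; (ii) there are λ_l ≥ 0 summing to 1 such that ∑_{l=0}^p λ_l A_l is positive semidefinite. -/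
/-!
After the congruence `Bₗ = Qᵀ Aₗ Q` all `Bₗ` have nonpositive off-diagonal entries, and for such
matrices the upper closure of the joint range `{(yᵀ Bₗ y)ₗ}` is convex: the vector
`√(a y² + b z²)` keeps the diagonal terms of `a yᵀBy + b zᵀBz` and, by Cauchy–Schwarz, can only
lower the off-diagonal ones. If no `x` makes every form negative, this convex upper set misses the
open negative orthant; a separating hyperplane then has a nonnegative normal, which normalised
gives weights `λ` in the simplex with `∑ λₗ yᵀ Bₗ y ≥ 0` for all `y`. Conversely, under such
weights the forms cannot all be negative at one point.
-/

open Finset MvPolynomial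

noncomputable section

lemma mul_add_mul_le_sqrt_mul_sqrt {a b : ℝ} (ha : 0 ≤ a) (hb : 0 ≤ b) (y₁ y₂ z₁ z₂ : ℝ) :
    a * (y₁ * y₂) + b * (z₁ * z₂) ≤ √(a * y₁ ^ 2 + b * z₁ ^ 2) * √(a * y₂ ^ 2 + b * z₂ ^ 2) := by
  rw [← Real.sqrt_mul (by positivity)]
  refine (le_abs_self _).trans (Real.abs_le_sqrt ?_)
  nlinarith [mul_nonneg (mul_nonneg ha hb) (sq_nonneg (y₁ * z₂ - z₁ * y₂))]

section Alternative

variable {ι : Type*} [Fintype ι]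

lemma exists_nonneg_forall_nonneg_of_isUpperSet {K : Set (ι → ℝ)} (hconv : Convex ℝ K)
    (hup : IsUpperSet K) (hne : K.Nonempty) (hK : ∀ v ∈ K, ∃ l, 0 ≤ v l) :
    ∃ μ : ι → ℝ, (∀ l, 0 ≤ μ l) ∧ 0 < ∑ l, μ l ∧ ∀ v ∈ K, 0 ≤ ∑ l, μ l * v l := by
  classical
  set O : Set (ι → ℝ) := Set.univ.pi fun _ => Set.Iio 0
  have hdisj : Disjoint O K := Set.disjoint_left.2 fun v hvO hvK => by
    obtain ⟨l, hl⟩ := hK v hvK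
    exact (hvO l (Set.mem_univ l)).not_ge hl
  obtain ⟨f, u, hfO, hfK⟩ := geometric_hahn_banach_open
    (convex_pi fun _ _ => convex_Iio 0) (isOpen_set_pi Set.finite_univ fun _ _ => isOpen_Iio)
    hconv hdisj
  set μ : ι → ℝ := fun l => f (Pi.single l 1)
  have hf : ∀ v, f v = ∑ l, μ l * v l := fun v => by
    have hsingle (l : ι) : (fun j => if l = j then (1 : ℝ) else 0) = Pi.single l 1 := by
      funext j; simp [Pi.single_apply, @eq_comm _ j l]
    simpa [μ, mul_comm, hsingle] using f.toLinearMap.pi_apply_eq_sum_univ v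
  obtain ⟨k, hk⟩ := hne
  have hμ : ∀ l, 0 ≤ μ l := fun l => by
    by_contra! hl
    set t := (f k - u + 1) / -μ l
    have ht : t * -μ l = f k - u + 1 := div_mul_cancel₀ _ (by linarith)
    have ht₀ : 0 ≤ t := div_nonneg (by linarith [hfK k hk]) (by linarith)
    have hkt : k + t • Pi.single l 1 ∈ K :=
      hup (le_add_of_nonneg_right (smul_nonneg ht₀ (Pi.single_nonneg.2 zero_le_one))) hk
    have := hfK _ hkt
    rw [map_add, map_smul, smul_eq_mul] at this
    change u ≤ f k + t * μ l at this
    linarith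
  have hu : 0 ≤ u := by
    refine le_of_forall_pos_lt_add fun ε hε => ?_
    have hS : 0 ≤ ∑ l, μ l := Finset.sum_nonneg fun l _ => hμ l
    have := hfO (fun _ => -(ε / (∑ l, μ l + 1))) fun l _ => by
      simp only [Set.mem_Iio, neg_lt_zero]; positivity
    rw [hf, ← Finset.sum_mul] at this
    have hε' : (∑ l, μ l) * (ε / (∑ l, μ l + 1)) ≤ ε := by
      rw [mul_div_assoc', div_le_iff₀ (by positivity)]; nlinarith
    linarith
  have hS : 0 < ∑ l, μ l := by
    refine (Finset.sum_nonneg fun l _ => hμ l).lt_of_ne fun hS => ?_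
    have hμ0 : ∀ l, μ l = 0 := fun l =>
      (Finset.sum_eq_zero_iff_of_nonneg fun l _ => hμ l).1 hS.symm l (Finset.mem_univ l)
    have hu0 : u ≤ 0 := by simpa [hf, hμ0] using hfK k hk
    have := hfO (fun _ => -1) fun l _ => by simp
    simp only [hf, hμ0, zero_mul, Finset.sum_const_zero] at this
    linarith
  exact ⟨μ, hμ, hS, fun v hv => hf v ▸ hu.trans (hfK v hv)⟩

lemma exists_mem_stdSimplex_forall_nonneg_of_isUpperSet {K : Set (ι → ℝ)}
    (hconv : Convex ℝ K) (hup : IsUpperSet K) (hne : K.Nonempty) (hK : ∀ v ∈ K, ∃ l, 0 ≤ v l) :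
    ∃ lam ∈ stdSimplex ℝ ι, ∀ v ∈ K, 0 ≤ ∑ l, lam l * v l := by
  obtain ⟨μ, hμ, hS, hμK⟩ := exists_nonneg_forall_nonneg_of_isUpperSet hconv hup hne hK
  refine ⟨fun l => μ l / ∑ l, μ l, ⟨fun l => div_nonneg (hμ l) hS.le, ?_⟩, fun v hv => ?_⟩
  · rw [← Finset.sum_div, div_self hS.ne']
  · simp_rw [div_mul_eq_mul_div, ← Finset.sum_div]
    exact div_nonneg (hμK v hv) hS.le

end Alternative

namespace Matrix

variable {ι n : Type*} [Fintype n]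

lemma dotProduct_mulVec_sqrt_le {B : Matrix n n ℝ} (hB : ∀ i j, i ≠ j → B i j ≤ 0)
    {a b : ℝ} (ha : 0 ≤ a) (hb : 0 ≤ b) (y z : n → ℝ) :
    (fun i => √(a * y i ^ 2 + b * z i ^ 2)) ⬝ᵥ B *ᵥ (fun i => √(a * y i ^ 2 + b * z i ^ 2)) ≤
      a * (y ⬝ᵥ B *ᵥ y) + b * (z ⬝ᵥ B *ᵥ z) := by
  simp only [dot_mulVec_eq_sum_sum, Finset.mul_sum, ← Finset.sum_add_distrib]
  refine Finset.sum_le_sum fun j _ => Finset.sum_le_sum fun i _ => ?_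
  obtain rfl | hij := eq_or_ne i j
  · rw [mul_right_comm, ← sq, Real.sq_sqrt (by positivity)]
    exact le_of_eq (by ring)
  · have := mul_add_mul_le_sqrt_mul_sqrt ha hb (y i) (y j) (z i) (z j)
    nlinarith [hB i j hij]

lemma convex_upperClosure_range_dotProduct_mulVec {B : ι → Matrix n n ℝ}
    (hB : ∀ l i j, i ≠ j → B l i j ≤ 0) :
    Convex ℝ (upperClosure (Set.range fun y l => y ⬝ᵥ B l *ᵥ y) : Set (ι → ℝ)) := by
  rintro v₁ hv₁ v₂ hv₂ a b ha hb -
  simp only [SetLike.mem_coe, mem_upperClosure, Set.exists_range_iff] at hv₁ hv₂ ⊢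
  obtain ⟨y, hy⟩ := hv₁
  obtain ⟨z, hz⟩ := hv₂
  refine ⟨fun i => √(a * y i ^ 2 + b * z i ^ 2), fun l => ?_⟩
  calc _ ≤ a * (y ⬝ᵥ B l *ᵥ y) + b * (z ⬝ᵥ B l *ᵥ z) := dotProduct_mulVec_sqrt_le (hB l) ha hb y z
    _ ≤ a * v₁ l + b * v₂ l := by gcongr <;> [exact hy l; exact hz l]

lemma dotProduct_mulVec_conj (Q M : Matrix n n ℝ) (y : n → ℝ) :
    y ⬝ᵥ (Qᵀ * M * Q) *ᵥ y = Q *ᵥ y ⬝ᵥ M *ᵥ (Q *ᵥ y) := by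
  rw [← mulVec_mulVec, ← mulVec_mulVec, dotProduct_mulVec, vecMul_transpose]

variable [Fintype ι]

lemma dotProduct_sum_smul_mulVec (A : ι → Matrix n n ℝ) (c : ι → ℝ) (x : n → ℝ) :
    x ⬝ᵥ (∑ l, c l • A l) *ᵥ x = ∑ l, c l * (x ⬝ᵥ A l *ᵥ x) := by
  simp only [sum_mulVec, dotProduct_sum, smul_mulVec, dotProduct_smul, smul_eq_mul]

lemma exists_nonneg_dotProduct_mulVec_of_posSemidef {A : ι → Matrix n n ℝ} {lam : ι → ℝ}
    (hlam : lam ∈ stdSimplex ℝ ι) (hpsd : (∑ l, lam l • A l).PosSemidef) (x : n → ℝ) :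
    ∃ l, 0 ≤ x ⬝ᵥ A l *ᵥ x := by
  by_contra! hneg
  obtain ⟨l, -, hl⟩ : ∃ l ∈ Finset.univ, (0 : ℝ) < lam l :=
    Finset.exists_lt_of_sum_lt (by simp [hlam.2])
  have := hpsd.dotProduct_mulVec_nonneg x
  rw [star_trivial, dotProduct_sum_smul_mulVec] at this
  exact this.not_gt <| Finset.sum_neg' (fun k _ => mul_nonpos_of_nonneg_of_nonpos (hlam.1 k)
    (hneg k).le) ⟨l, Finset.mem_univ l, mul_neg_of_pos_of_neg hl (hneg l)⟩

lemma exists_mem_stdSimplex_sum_dotProduct_mulVec_nonneg {B : ι → Matrix n n ℝ}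
    (hB : ∀ l i j, i ≠ j → B l i j ≤ 0) (h : ∀ y, ∃ l, 0 ≤ y ⬝ᵥ B l *ᵥ y) :
    ∃ lam ∈ stdSimplex ℝ ι, ∀ y, 0 ≤ ∑ l, lam l * (y ⬝ᵥ B l *ᵥ y) := by
  obtain ⟨lam, hlam, hK⟩ := exists_mem_stdSimplex_forall_nonneg_of_isUpperSet
    (convex_upperClosure_range_dotProduct_mulVec hB) (UpperSet.upper _)
    ⟨_, subset_upperClosure ⟨0, rfl⟩⟩ fun v hv => by
      obtain ⟨_, ⟨y, rfl⟩, hyv⟩ := mem_upperClosure.1 hv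
      obtain ⟨l, hl⟩ := h y
      exact ⟨l, hl.trans (hyv l)⟩
  exact ⟨lam, hlam, fun y => hK _ (subset_upperClosure ⟨y, rfl⟩)⟩

end Matrix

open Matrix in
/-- Matrix case of Yuan's theorem of the alternative. -/
theorem stmt10 (n p : ℕ) (A : Fin (p + 1) → Matrix (Fin n) (Fin n) ℝ)
    (hA : ∀ l, (A l).IsSymm)
    (Q : Matrix (Fin n) (Fin n) ℝ) (hQ : IsUnit Q.det)
    (hoff : ∀ l, ∀ i j : Fin n, i ≠ j → (Q.transpose * A l * Q) i j ≤ 0) :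
    Xor' (∃ x : Fin n → ℝ, ∀ l, x ⬝ᵥ (A l).mulVec x < 0)
      (∃ lam : Fin (p + 1) → ℝ, (∀ l, 0 ≤ lam l) ∧ (∑ l, lam l) = 1 ∧
        (∑ l, lam l • A l).PosSemidef) := by
  refine xor_iff_not_iff'.2 ⟨fun hnone => ?_, ?_⟩
  · obtain ⟨lam, hlam, hnonneg⟩ := exists_mem_stdSimplex_sum_dotProduct_mulVec_nonneg hoff
      fun y => by simpa only [dotProduct_mulVec_conj, not_forall, not_lt] using
        not_exists.1 hnone (Q *ᵥ y)
    refine ⟨lam, hlam.1, hlam.2, posSemidef_iff_dotProduct_mulVec.2 ⟨?_, fun x => ?_⟩⟩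
    · exact isHermitian_iff_isSymm.2 <| Finset.sum_induction _ IsSymm (fun _ _ => IsSymm.add)
        isSymm_zero fun l _ => (hA l).smul _
    · have hx : Q *ᵥ (Q⁻¹ *ᵥ x) = x := by rw [mulVec_mulVec, mul_nonsing_inv Q hQ, one_mulVec]
      simpa only [star_trivial, dotProduct_sum_smul_mulVec, dotProduct_mulVec_conj, hx]
        using hnonneg (Q⁻¹ *ᵥ x)
  · rintro ⟨lam, hlam₀, hlam₁, hpsd⟩ ⟨x, hx⟩
    obtain ⟨l, hl⟩ := exists_nonneg_dotProduct_mulVec_of_posSemidef ⟨hlam₀, hlam₁⟩ hpsd x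
    exact (hx l).not_ge hl
end
end

section
/- Let f_M(x₁,x₂,x₃) = x₃⁶ + x₁²x₂⁴ + x₁⁴x₂² − 3x₁²x₂²x₃², f_0(x₁,x₂,x₃,x₄) = f_M(x₁,x₂,x₃), and f_1(x₁,x₂,x₃,x₄) = x₁⁶ + x₂⁶ + x₃⁶ − x₄⁶. Then (a) there is no x ∈ ℝ⁴ with f_0(x) < 0 and f_1(x) < 0, and (b) there are no λ_0, λ_1 ≥ 0 with λ_0 + λ_1 = 1 such that λ_0 f_0 + λ_1 f_1 is a sum of squares of polynomials. -/
open Finset MvPolynomial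

noncomputable section

/-!
Motzkin's polynomial `M = z⁶ + x²y⁴ + x⁴y² - 3x²y²z²` is nonnegative because `(x² + y² + z²) M`
is a sum of squares. It is not itself one, by the Newton polytope argument. Suppose `M = ∑ gⱼ²`
and let `α` be an exponent of some `gⱼ` that maximizes an additive functional `φ` and is an extreme
point of all these exponents. Then `2α` can only arise as `α + α`, so its coefficient in `M` is
`∑ coeff_α(gⱼ)² > 0`; hence on the exponents of every `gⱼ`, `φ` is at most half its maximum over
the support of `M`. The functionals `β_x + β_y + β_z`, `β_x - 2β_y` and `β_y - 2β_x` then leave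
`xyz · xyz` as the only way to write `x²y²z²` as a product of two monomials of the `gⱼ`, so the
coefficient `-3` of `x²y²z²` in `M` would equal `∑ coeff_{xyz}(gⱼ)² ≥ 0`.

For the combination `λ₀ f₀ + λ₁ f₁`: it takes the value `-λ₁` at `(0, 0, 0, 1)`, so a sum of
squares forces `λ₁ = 0`, and then it is `M`.
-/

namespace MvPolynomial

variable {σ R M : Type*}

theorem coeff_add_self_sq [CommSemiring R] {g : MvPolynomial σ R} {α : σ →₀ ℕ}
    (hα : ∀ β ∈ g.support, ∀ γ ∈ g.support, β + γ = α + α → β = α) :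
    coeff (α + α) (g ^ 2) = coeff α g ^ 2 := by
  classical
  rw [sq, sq, coeff_mul, Finset.sum_eq_single (α, α)]
  · rintro ⟨β, γ⟩ hβγ hne
    rw [HasAntidiagonal.mem_antidiagonal] at hβγ
    rcases eq_or_ne (coeff β g) 0 with hβ | hβ
    · rw [hβ, zero_mul]
    rcases eq_or_ne (coeff γ g) 0 with hγ | hγ
    · rw [hγ, mul_zero]
    have hβα := hα β (mem_support_iff.mpr hβ) γ (mem_support_iff.mpr hγ) hβγ
    have hγα := hα γ (mem_support_iff.mpr hγ) β (mem_support_iff.mpr hβ) (by rwa [add_comm])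
    exact absurd (by rw [hβα, hγα]) hne
  · simp

theorem exists_max_image_extreme [AddCommMonoid M] [LinearOrder M] [IsOrderedCancelAddMonoid M]
    (φ : (σ →₀ ℕ) →+ M) {B : Finset (σ →₀ ℕ)} (hB : B.Nonempty) :
    ∃ α ∈ B, (∀ β ∈ B, φ β ≤ φ α) ∧ ∀ β ∈ B, ∀ γ ∈ B, β + γ = α + α → β = α := by
  -- Among the maximizers of `φ`, take the lexicographically largest exponent (for any well-order
  -- on `σ`): lexicographic order is compatible with addition.
  let : LinearOrder σ := IsWellOrder.linearOrder WellOrderingRel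
  obtain ⟨α₀, hα₀, hφα₀⟩ := B.exists_max_image φ hB
  obtain ⟨α, hα, hlex⟩ := (B.filter (φ · = φ α₀)).exists_max_image toLex ⟨α₀, by simp [hα₀]⟩
  rw [mem_filter] at hα
  refine ⟨α, hα.1, fun β hβ => hα.2 ▸ hφα₀ β hβ, fun β hβ γ hγ hβγ => ?_⟩
  have hφ : φ β = φ α ∧ φ γ = φ α := by
    refine (add_eq_add_iff_eq_and_eq (hα.2 ▸ hφα₀ β hβ) (hα.2 ▸ hφα₀ γ hγ)).mp ?_
    rw [← map_add, hβγ, map_add]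
  have hle : ∀ δ ∈ B, φ δ = φ α → toLex δ ≤ toLex α := fun δ hδ h =>
    hlex δ (mem_filter.mpr ⟨hδ, h.trans hα.2⟩)
  exact ofLex_inj.mp <| ((add_eq_add_iff_eq_and_eq (hle β hβ hφ.1) (hle γ hγ hφ.2)).mp
    congr(toLex $hβγ)).1

theorem apply_le_of_mem_support_sum_sq [CommRing R] [LinearOrder R] [IsStrictOrderedRing R]
    [AddCommMonoid M] [LinearOrder M] [IsOrderedCancelAddMonoid M] {ι : Type*} {s : Finset ι}
    {g : ι → MvPolynomial σ R} (φ : (σ →₀ ℕ) →+ M) {c : M}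
    (hp : ∀ α ∈ (∑ j ∈ s, g j ^ 2).support, φ α ≤ c + c)
    {j : ι} (hj : j ∈ s) {β : σ →₀ ℕ} (hβ : β ∈ (g j).support) : φ β ≤ c := by
  classical
  set B := s.biUnion fun j => (g j).support
  have hβB : β ∈ B := mem_biUnion.mpr ⟨j, hj, hβ⟩
  obtain ⟨α, hαB, hφα, hvert⟩ := exists_max_image_extreme φ ⟨β, hβB⟩
  obtain ⟨i, hi, hαi⟩ := mem_biUnion.mp hαB
  have hsupp : ∀ k ∈ s, (g k).support ⊆ B := fun k hk =>
    subset_biUnion_of_mem (fun j => (g j).support) hk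
  have hcoeff : coeff (α + α) (∑ j ∈ s, g j ^ 2) = ∑ j ∈ s, coeff α (g j) ^ 2 := by
    rw [coeff_sum]
    exact sum_congr rfl fun k hk => coeff_add_self_sq fun β hβ γ hγ =>
      hvert β (hsupp k hk hβ) γ (hsupp k hk hγ)
  have hpos : 0 < coeff (α + α) (∑ j ∈ s, g j ^ 2) := by
    rw [hcoeff]
    exact sum_pos' (fun k _ => sq_nonneg _) ⟨i, hi, sq_pos_of_ne_zero (mem_support_iff.mp hαi)⟩
  have hαc : φ α + φ α ≤ c + c := map_add φ α α ▸ hp _ (mem_support_iff.mpr hpos.ne')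
  exact (hφα β hβB).trans (le_of_not_gt fun h => (add_lt_add h h).not_ge hαc)

end MvPolynomial

section Motzkin

open Finsupp (single)

variable {σ R : Type*} [CommRing R]

def motzkin (x y z : σ) : MvPolynomial σ R :=
  X z ^ 6 + X x ^ 2 * X y ^ 4 + X x ^ 4 * X y ^ 2 - 3 * X x ^ 2 * X y ^ 2 * X z ^ 2

theorem eval_motzkin (v : σ → R) (x y z : σ) :
    eval v (motzkin x y z) =
      v z ^ 6 + v x ^ 2 * v y ^ 4 + v x ^ 4 * v y ^ 2 - 3 * v x ^ 2 * v y ^ 2 * v z ^ 2 := by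
  simp [motzkin]

theorem motzkin_nonneg [LinearOrder R] [IsStrictOrderedRing R] (a b c : R) :
    0 ≤ c ^ 6 + a ^ 2 * b ^ 4 + a ^ 4 * b ^ 2 - 3 * a ^ 2 * b ^ 2 * c ^ 2 := by
  have key : 0 ≤ (a ^ 2 + b ^ 2 + c ^ 2) *
      (c ^ 6 + a ^ 2 * b ^ 4 + a ^ 4 * b ^ 2 - 3 * a ^ 2 * b ^ 2 * c ^ 2) := by
    nlinarith [sq_nonneg (a ^ 2 * b * c - b * c ^ 3), sq_nonneg (a * b ^ 2 * c - a * c ^ 3),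
      sq_nonneg (a ^ 2 * b ^ 2 - c ^ 4), sq_nonneg (a * b ^ 3 - a ^ 3 * b),
      sq_nonneg (a * b ^ 3 + a ^ 3 * b - 2 * a * b * c ^ 2)]
  rcases (by positivity : 0 ≤ a ^ 2 + b ^ 2 + c ^ 2).eq_or_lt with h | h
  · obtain rfl : c = 0 := by nlinarith [sq_nonneg a, sq_nonneg b, sq_nonneg c]
    obtain rfl : b = 0 := by nlinarith [sq_nonneg a, sq_nonneg b]
    simp
  · exact nonneg_of_mul_nonneg_right key h

theorem motzkin_eq_monomial (x y z : σ) :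
    (motzkin x y z : MvPolynomial σ R) =
      monomial (single z 6) 1 + monomial (single x 2 + single y 4) 1
        + monomial (single x 4 + single y 2) 1
        - monomial (single x 2 + single y 2 + single z 2) 3 := by
  simp only [motzkin, X_pow_eq_monomial, monomial_mul, mul_one]
  rw [show (3 : MvPolynomial σ R) = C 3 from rfl, C_mul_monomial]
  simp

theorem forall_mem_support_motzkin {x y z : σ} {P : (σ →₀ ℕ) → Prop} (h₁ : P (single z 6))
    (h₂ : P (single x 2 + single y 4)) (h₃ : P (single x 4 + single y 2))
    (h₄ : P (single x 2 + single y 2 + single z 2)) :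
    ∀ α ∈ (motzkin x y z : MvPolynomial σ R).support, P α := by
  classical
  intro α hα
  rw [MvPolynomial.mem_support_iff, motzkin_eq_monomial] at hα
  simp only [coeff_add, coeff_sub, coeff_monomial] at hα
  split_ifs at hα <;> first | (subst_vars; assumption) | simp at hα

theorem coeff_motzkin {x y z : σ} (hxy : x ≠ y) (hxz : x ≠ z) (hyz : y ≠ z) :
    coeff (single x 2 + single y 2 + single z 2) (motzkin x y z : MvPolynomial σ R) = -3 := by
  classical
  rw [motzkin_eq_monomial]
  simp only [coeff_add, coeff_sub, coeff_monomial]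
  rw [if_neg, if_neg, if_neg]
  · simp
  all_goals
    intro h
    have hx := DFunLike.congr_fun h x
    have hz := DFunLike.congr_fun h z
    simp [hxy, hxz, hxz.symm, hyz.symm] at hx hz

theorem exponent_bounds_of_motzkin_eq_sum_sq [LinearOrder R] [IsStrictOrderedRing R] {x y z : σ}
    (hxy : x ≠ y) (hxz : x ≠ z) (hyz : y ≠ z) {ι : Type*} {s : Finset ι}
    {g : ι → MvPolynomial σ R} (h : motzkin x y z = ∑ j ∈ s, g j ^ 2) {j : ι} (hj : j ∈ s)
    {β : σ →₀ ℕ} (hβ : β ∈ (g j).support) :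
    β x + β y + β z ≤ 3 ∧ β x ≤ 2 * β y ∧ β y ≤ 2 * β x := by
  have bound : ∀ a b c k : ℤ, (∀ α ∈ (motzkin x y z : MvPolynomial σ R).support,
      a * α x + b * α y + c * α z ≤ k + k) → a * β x + b * β y + c * β z ≤ k :=
    fun a b c k hk => MvPolynomial.apply_le_of_mem_support_sum_sq
      (AddMonoidHom.mk' (fun β : σ →₀ ℕ => a * β x + b * β y + c * β z) fun _ _ => by
        simp only [Finsupp.coe_add, Pi.add_apply, Nat.cast_add]; ring)
      (h ▸ hk) hj hβ
  have h₁ := bound 1 1 1 3 (by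
    apply forall_mem_support_motzkin <;> simp [hxy, hxz, hyz, hxy.symm, hxz.symm, hyz.symm])
  have h₂ := bound 1 (-2) 0 0 (by
    apply forall_mem_support_motzkin <;> simp [hxy, hxz, hyz, hxy.symm, hxz.symm, hyz.symm])
  have h₃ := bound (-2) 1 0 0 (by
    apply forall_mem_support_motzkin <;> simp [hxy, hxz, hyz, hxy.symm, hxz.symm, hyz.symm])
  omega

theorem eq_of_add_eq_of_exponent_bounds {x y z : σ} (hxy : x ≠ y) (hxz : x ≠ z) (hyz : y ≠ z)
    {β γ : σ →₀ ℕ} (hβ : β x + β y + β z ≤ 3 ∧ β x ≤ 2 * β y ∧ β y ≤ 2 * β x)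
    (hγ : γ x + γ y + γ z ≤ 3 ∧ γ x ≤ 2 * γ y ∧ γ y ≤ 2 * γ x)
    (h : β + γ = single x 2 + single y 2 + single z 2) :
    β = single x 1 + single y 1 + single z 1 := by
  have hx := DFunLike.congr_fun h x
  have hy := DFunLike.congr_fun h y
  have hz := DFunLike.congr_fun h z
  simp only [Finsupp.coe_add, Pi.add_apply, Finsupp.single_eq_same, ne_eq, not_false_eq_true,
    Finsupp.single_eq_of_ne, add_zero, zero_add, hxy, hxz, hyz, hxy.symm, hxz.symm, hyz.symm]
    at hx hy hz
  ext i
  have hi := DFunLike.congr_fun h i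
  by_cases hix : i = x
  · subst hix
    simp only [Finsupp.coe_add, Pi.add_apply, Finsupp.single_eq_same, ne_eq, hxy, hxz,
      not_false_eq_true, Finsupp.single_eq_of_ne, add_zero]
    omega
  by_cases hiy : i = y
  · subst hiy
    simp only [Finsupp.coe_add, Pi.add_apply, ne_eq, hxy.symm, hyz, not_false_eq_true,
      Finsupp.single_eq_of_ne, Finsupp.single_eq_same, zero_add, add_zero]
    omega
  by_cases hiz : i = z
  · subst hiz
    simp only [Finsupp.coe_add, Pi.add_apply, ne_eq, hxz.symm, hyz.symm, not_false_eq_true,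
      Finsupp.single_eq_of_ne, Finsupp.single_eq_same, add_zero, zero_add]
    omega
  simp only [Finsupp.coe_add, Pi.add_apply, ne_eq, Ne.symm hix, Ne.symm hiy, Ne.symm hiz,
    not_false_eq_true, Finsupp.single_eq_of_ne', add_zero, Nat.add_eq_zero_iff] at hi ⊢
  exact hi.1

theorem motzkin_ne_sum_sq [LinearOrder R] [IsStrictOrderedRing R] {x y z : σ}
    (hxy : x ≠ y) (hxz : x ≠ z) (hyz : y ≠ z) {ι : Type*} (s : Finset ι)
    (g : ι → MvPolynomial σ R) : motzkin x y z ≠ ∑ j ∈ s, g j ^ 2 := by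
  intro h
  set α : σ →₀ ℕ := single x 1 + single y 1 + single z 1
  have hα : α + α = single x 2 + single y 2 + single z 2 := by
    simp only [α, ← two_nsmul, smul_add, Finsupp.smul_single, smul_eq_mul, mul_one]
  have hcoeff : ∀ j ∈ s, coeff (α + α) (g j ^ 2) = coeff α (g j) ^ 2 := fun j hj =>
    MvPolynomial.coeff_add_self_sq fun β hβ γ hγ hβγ =>
      eq_of_add_eq_of_exponent_bounds hxy hxz hyz
        (exponent_bounds_of_motzkin_eq_sum_sq hxy hxz hyz h hj hβ)
        (exponent_bounds_of_motzkin_eq_sum_sq hxy hxz hyz h hj hγ) (hβγ.trans hα)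
  have hsum : (-3 : R) = ∑ j ∈ s, coeff α (g j) ^ 2 := by
    rw [← coeff_motzkin hxy hxz hyz, ← hα, h, coeff_sum]
    exact sum_congr rfl hcoeff
  linarith [sum_nonneg fun j (_ : j ∈ s) => sq_nonneg (coeff α (g j))]

end Motzkin

theorem IsSOSFun.nonneg {n : ℕ} {f : (Fin n → ℝ) → ℝ} (hf : IsSOSFun f) (x : Fin n → ℝ) :
    0 ≤ f x := by
  obtain ⟨r, g, hg⟩ := hf
  rw [hg]
  positivity

theorem IsSOSFun.isSOSPoly {n : ℕ} {p : MvPolynomial (Fin n) ℝ} (hp : IsSOSFun fun x => eval x p) :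
    IsSOSPoly p := by
  obtain ⟨r, g, hg⟩ := hp
  exact ⟨r, g, MvPolynomial.funext fun x => by simpa using hg x⟩

theorem not_isSOSPoly_motzkin {n : ℕ} {x y z : Fin n} (hxy : x ≠ y) (hxz : x ≠ z) (hyz : y ≠ z) :
    ¬ IsSOSPoly (motzkin x y z : MvPolynomial (Fin n) ℝ) :=
  fun ⟨_, g, h⟩ => motzkin_ne_sum_sq hxy hxz hyz univ g h

/-- Both alternatives of the tensor Yuan theorem can fail without the sign
structure assumption (Motzkin-based example). -/
theorem stmt12 :
    (¬ ∃ x : Fin 4 → ℝ,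
        ((x 2) ^ 6 + (x 0) ^ 2 * (x 1) ^ 4 + (x 0) ^ 4 * (x 1) ^ 2
            - 3 * (x 0) ^ 2 * (x 1) ^ 2 * (x 2) ^ 2 < 0) ∧
        ((x 0) ^ 6 + (x 1) ^ 6 + (x 2) ^ 6 - (x 3) ^ 6 < 0)) ∧
    ¬ ∃ l0 l1 : ℝ, 0 ≤ l0 ∧ 0 ≤ l1 ∧ l0 + l1 = 1 ∧
        IsSOSFun (fun x : Fin 4 → ℝ =>
          l0 * ((x 2) ^ 6 + (x 0) ^ 2 * (x 1) ^ 4 + (x 0) ^ 4 * (x 1) ^ 2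
              - 3 * (x 0) ^ 2 * (x 1) ^ 2 * (x 2) ^ 2) +
          l1 * ((x 0) ^ 6 + (x 1) ^ 6 + (x 2) ^ 6 - (x 3) ^ 6)) := by
  refine ⟨fun ⟨x, hM, _⟩ => (motzkin_nonneg (x 0) (x 1) (x 2)).not_gt hM, ?_⟩
  rintro ⟨l0, l1, -, hl1, hsum, hsos⟩
  obtain rfl : l1 = 0 := le_antisymm (by simpa using hsos.nonneg (Pi.single 3 1)) hl1
  obtain rfl : l0 = 1 := by linarith
  refine not_isSOSPoly_motzkin (n := 4) (x := 0) (y := 1) (z := 2) (by decide) (by decide)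
    (by decide) ?_
  apply IsSOSFun.isSOSPoly
  simpa [eval_motzkin] using hsos
end
end

section
/- (Exact conic relaxation) Let m be even and let f_0,...,f_p be polynomials of degree m on ℝ^n with essentially nonpositive coefficients, with nonempty feasible set {x : f_l(x) ≤ 0, l = 1,...,p}. Let F̃_l be the symmetric tensor of the canonical homogenization f̃_l on ℝ^{n+1}. Then min{f_0(x) : f_l(x) ≤ 0, l=1,...,p} = min{⟨F̃_0, X⟩ : ⟨F̃_l, X⟩ ≤ 0 (l=1,...,p), X_{n+1,...,n+1} = 1, X ∈ U_{m,n+1}}. Moreover, if X̄ solves the conic problem, then x̄ = ((X̄_{1...1})^{1/m},...,(X̄_{n...n})^{1/m}) solves the polynomial problem. -/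
open Finset MvPolynomial

noncomputable section

/-! Write `X ∈ U_{m,n+1}` as `∑ⱼ wⱼ yⱼ^{⊗m}` with `wⱼ ≥ 0` and put `x̄_c = (X_{c⋯c})^{1/m}`,
so that `x̄_c^m = ∑ⱼ wⱼ y_{jc}^m` and `⟨F̃, X⟩ = ∑ⱼ wⱼ f̃(yⱼ)`. Compare `f̃(x̄)` with
`∑ⱼ wⱼ f̃(yⱼ)` monomial by monomial: on the pure powers `x_c^m` the two sides agree, and every
other monomial `x^β` has a nonpositive coefficient and satisfies the generalized Hölder inequality
`∑ⱼ wⱼ yⱼ^β ≤ x̄^β` (weighted AM-GM applied to the ratios `y_{jc} / x̄_c`; evenness of `m` allows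
passing to `|yⱼ|`). When `X_{n+1⋯n+1} = 1` this reads `f(x̄) ≤ ⟨F̃, X⟩`, while
`⟨F̃_l, (x, 1)^{⊗m}⟩ = f_l(x)`; so the two problems have the same infimum, and `x̄` is feasible and
optimal whenever `X` is. -/

/-- `f̃(x, t)`, the canonical degree-`m` homogenization of `f`. -/
def evalHomogenization {n : ℕ} (m : ℕ) (f : MvPolynomial (Fin n) ℝ) (x : Fin n → ℝ) (t : ℝ) :
    ℝ :=
  ∑ α ∈ f.support, f.coeff α * (∏ i : Fin n, x i ^ α i) * t ^ (m - ∑ i : Fin n, α i)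

def diagRoot {N : ℕ} (m : ℕ) (X : (Fin m → Fin N) → ℝ) : Fin N → ℝ :=
  fun c => X (fun _ => c) ^ ((1 : ℝ) / m)

section Holder

variable {ι κ : Type*} [Fintype κ] {m : ℕ}

theorem prod_pow_le_sum_div_mul_pow (hm0 : 0 < m) (β : κ → ℕ) (hβ : ∑ i, β i = m)
    (a : κ → ℝ) (ha : ∀ i, 0 ≤ a i) :
    ∏ i, a i ^ β i ≤ ∑ i, (β i / m : ℝ) * a i ^ m := by
  have hm : (m : ℝ) ≠ 0 := by positivity
  have hweights : ∑ i, (β i / m : ℝ) = 1 := by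
    rw [← Finset.sum_div, ← Nat.cast_sum, hβ, div_self hm]
  have hpow : ∀ i, (a i ^ m) ^ (β i / m : ℝ) = a i ^ β i := fun i => by
    rw [← Real.rpow_natCast (a i) m, ← Real.rpow_mul (ha i), mul_div_cancel₀ _ hm,
      Real.rpow_natCast]
  simpa only [hpow] using Real.geom_mean_le_arith_mean_weighted Finset.univ
    (fun i => (β i / m : ℝ)) (fun i => a i ^ m) (fun i _ => by positivity) hweights
    (fun i _ => pow_nonneg (ha i) m)

theorem sum_mul_prod_pow_eq_zero (hm0 : 0 < m) (β : κ → ℕ) (s : Finset ι) (w : ι → ℝ)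
    (hw : ∀ j ∈ s, 0 ≤ w j) (y : ι → κ → ℝ) (hy : ∀ j ∈ s, ∀ i, 0 ≤ y j i) {i : κ}
    (hβi : β i ≠ 0) (hzero : ∑ j ∈ s, w j * y j i ^ m = 0) :
    ∑ j ∈ s, w j * ∏ k, y j k ^ β k = 0 := by
  have hterm : ∀ j ∈ s, w j * y j i ^ m = 0 :=
    (Finset.sum_eq_zero_iff_of_nonneg fun j hj =>
      mul_nonneg (hw j hj) (pow_nonneg (hy j hj i) m)).1 hzero
  refine Finset.sum_eq_zero fun j hj => ?_
  rcases mul_eq_zero.1 (hterm j hj) with hwj | hyj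
  · rw [hwj, zero_mul]
  · rw [Finset.prod_eq_zero (Finset.mem_univ i)
      (by rw [pow_eq_zero_iff hm0.ne' |>.1 hyj, zero_pow hβi]), mul_zero]

theorem sum_mul_prod_pow_le_prod_pow_of_nonneg (hm0 : 0 < m) (β : κ → ℕ) (hβ : ∑ i, β i = m)
    (s : Finset ι) (w : ι → ℝ) (hw : ∀ j ∈ s, 0 ≤ w j) (y : ι → κ → ℝ)
    (hy : ∀ j ∈ s, ∀ i, 0 ≤ y j i) (z : κ → ℝ) (hz : ∀ i, 0 ≤ z i)
    (hzm : ∀ i, z i ^ m = ∑ j ∈ s, w j * y j i ^ m) :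
    ∑ j ∈ s, w j * ∏ i, y j i ^ β i ≤ ∏ i, z i ^ β i := by
  by_cases hdegen : ∃ i, β i ≠ 0 ∧ z i = 0
  · obtain ⟨i, hβi, hzi⟩ := hdegen
    rw [Finset.prod_eq_zero (Finset.mem_univ i) (by rw [hzi, zero_pow hβi]),
      sum_mul_prod_pow_eq_zero hm0 β s w hw y hy hβi (by rw [← hzm, hzi, zero_pow hm0.ne'])]
  push Not at hdegen
  set P := ∏ i, z i ^ β i
  have hP : 0 < P := Finset.prod_pos fun i _ => by
    by_cases hβi : β i = 0
    · simp [hβi]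
    · exact pow_pos ((hz i).lt_of_ne (hdegen i hβi).symm) _
  have hamgm : ∀ j ∈ s, (∏ i, y j i ^ β i) / P ≤ ∑ i, (β i / m : ℝ) * (y j i / z i) ^ m :=
    fun j hj => by
      rw [← Finset.prod_div_distrib, ← Finset.prod_congr rfl fun i _ => div_pow _ _ _]
      exact prod_pow_le_sum_div_mul_pow hm0 β hβ _ fun i => div_nonneg (hy j hj i) (hz i)
  have hswap : ∑ j ∈ s, w j * ∑ i, (β i / m : ℝ) * (y j i / z i) ^ m =
      ∑ i, (β i / m : ℝ) * (z i ^ m / z i ^ m) := by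
    simp_rw [Finset.mul_sum]
    rw [Finset.sum_comm]
    refine Finset.sum_congr rfl fun i _ => ?_
    nth_rewrite 1 [hzm i]
    rw [Finset.sum_div, Finset.mul_sum]
    exact Finset.sum_congr rfl fun j _ => by ring
  calc ∑ j ∈ s, w j * ∏ i, y j i ^ β i
      = P * ∑ j ∈ s, w j * ((∏ i, y j i ^ β i) / P) := by
        rw [Finset.mul_sum]
        exact Finset.sum_congr rfl fun j _ => by field_simp
    _ ≤ P * ∑ j ∈ s, w j * ∑ i, (β i / m : ℝ) * (y j i / z i) ^ m := by
        gcongr with j hj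
        · exact hw j hj
        · exact hamgm j hj
    _ = P * ∑ i, (β i / m : ℝ) * (z i ^ m / z i ^ m) := by rw [hswap]
    _ ≤ P * ∑ i, (β i / m : ℝ) := by
        gcongr with i
        exact mul_le_of_le_one_right (by positivity) (div_self_le_one _)
    _ = P := by
        rw [← Finset.sum_div, ← Nat.cast_sum, hβ, div_self (by positivity), mul_one]

theorem sum_mul_prod_pow_le_prod_pow_of_even (hm : Even m) (hm0 : 0 < m) (β : κ → ℕ)
    (hβ : ∑ i, β i = m) (s : Finset ι) (w : ι → ℝ) (hw : ∀ j ∈ s, 0 ≤ w j) (y : ι → κ → ℝ)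
    (z : κ → ℝ) (hz : ∀ i, 0 ≤ z i) (hzm : ∀ i, z i ^ m = ∑ j ∈ s, w j * y j i ^ m) :
    ∑ j ∈ s, w j * ∏ i, y j i ^ β i ≤ ∏ i, z i ^ β i :=
  calc ∑ j ∈ s, w j * ∏ i, y j i ^ β i ≤ ∑ j ∈ s, w j * ∏ i, |y j i| ^ β i := by
        refine Finset.sum_le_sum fun j hj => mul_le_mul_of_nonneg_left ?_ (hw j hj)
        simpa only [Finset.abs_prod, abs_pow] using le_abs_self (∏ i, y j i ^ β i)
    _ ≤ ∏ i, z i ^ β i :=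
        sum_mul_prod_pow_le_prod_pow_of_nonneg hm0 β hβ s w hw _ (fun _ _ _ => abs_nonneg _) z
          hz fun i => by simp only [hm.pow_abs, hzm]

end Holder

theorem prod_pow_eq_pow_of_sum_eq {κ M : Type*} [Fintype κ] [CommMonoid M] (β : κ → ℕ) (c : κ)
    (hc : ∑ i, β i = β c) (y : κ → M) : ∏ i, y i ^ β i = y c ^ β c := by
  classical
  have hrest : ∑ i ∈ Finset.univ.erase c, β i = 0 := by
    have := Finset.add_sum_erase Finset.univ β (Finset.mem_univ c)
    omega
  refine Finset.prod_eq_single c (fun i _ hi => ?_) (by simp)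
  rw [Finset.sum_eq_zero_iff.1 hrest i (Finset.mem_erase.2 ⟨hi, Finset.mem_univ i⟩), pow_zero]

section Homogenization

variable {n m : ℕ}

theorem evalHomogenization_one (f : MvPolynomial (Fin n) ℝ) (x : Fin n → ℝ) :
    evalHomogenization m f x 1 = eval x f := by
  simp only [evalHomogenization, one_pow, mul_one, eval_eq']

theorem evalHomogenization_init_last (f : MvPolynomial (Fin n) ℝ) (y : Fin (n + 1) → ℝ) :
    evalHomogenization m f (Fin.init y) (y (Fin.last n)) =
      ∑ α ∈ f.support,
        f.coeff α * ∏ c, y c ^ (Fin.snoc (⇑α) (m - ∑ i, α i) : Fin (n + 1) → ℕ) c := by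
  refine Finset.sum_congr rfl fun α _ => ?_
  rw [Fin.prod_univ_castSucc, mul_assoc]
  simp only [Fin.init, Fin.snoc_castSucc, Fin.snoc_last]

theorem evalHomogenization_le_sum_mul (hm : Even m) (hm0 : 0 < m) {f : MvPolynomial (Fin n) ℝ}
    (hdeg : f.totalDegree ≤ m) (hcoeff : EssNonposCoeff m f) {ι : Type*} (s : Finset ι)
    (w : ι → ℝ) (hw : ∀ j ∈ s, 0 ≤ w j) (y : ι → Fin (n + 1) → ℝ) (z : Fin (n + 1) → ℝ)
    (hz : ∀ c, 0 ≤ z c) (hzm : ∀ c, z c ^ m = ∑ j ∈ s, w j * y j c ^ m) :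
    evalHomogenization m f (Fin.init z) (z (Fin.last n)) ≤
      ∑ j ∈ s, w j * evalHomogenization m f (Fin.init (y j)) (y j (Fin.last n)) := by
  simp_rw [evalHomogenization_init_last, Finset.mul_sum]
  rw [Finset.sum_comm]
  refine Finset.sum_le_sum fun α hα => ?_
  simp_rw [mul_left_comm (w _), ← Finset.mul_sum]
  set β : Fin (n + 1) → ℕ := Fin.snoc (⇑α) (m - ∑ i, α i)
  have hαm : ∑ i, α i ≤ m := by
    have := (le_totalDegree hα).trans hdeg
    rwa [Finsupp.sum_fintype _ _ fun _ => rfl] at this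
  have hβ : ∑ c, β c = m := by
    rw [Fin.sum_univ_castSucc]
    simp only [β, Fin.snoc_castSucc, Fin.snoc_last]
    omega
  by_cases hpure : ∃ c, β c = m
  · obtain ⟨c, hc⟩ := hpure
    have hprod (v : Fin (n + 1) → ℝ) : ∏ i, v i ^ β i = v c ^ m := by
      rw [prod_pow_eq_pow_of_sum_eq β c (hβ.trans hc.symm), hc]
    simp only [hprod, hzm, le_refl]
  · push Not at hpure
    have hα0 : α ≠ 0 := fun h => hpure (Fin.last n) (by simp [β, h])
    have hαsingle : ∀ i, α ≠ Finsupp.single i m := fun i h =>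
      hpure i.castSucc (by simp [β, h])
    exact mul_le_mul_of_nonpos_left
      (sum_mul_prod_pow_le_prod_pow_of_even hm hm0 β hβ s w hw y z hz hzm)
      (hcoeff α hα0 hαsingle)

end Homogenization

section Tensor

variable {m N : ℕ}

theorem tIP_sum_smul (F : (Fin m → Fin N) → ℝ) {ι : Type*} (s : Finset ι) (w : ι → ℝ)
    (Z : ι → (Fin m → Fin N) → ℝ) :
    tIP F (∑ j ∈ s, w j • Z j) = ∑ j ∈ s, w j * tIP F (Z j) := by
  simp only [tIP, Finset.sum_apply, Pi.smul_apply, smul_eq_mul, Finset.mul_sum]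
  rw [Finset.sum_comm]
  exact Finset.sum_congr rfl fun j _ => Finset.sum_congr rfl fun i _ => by ring

theorem rk1_const (y : Fin N → ℝ) (c : Fin N) : rk1 m y (fun _ => c) = y c ^ m := by
  simp [rk1]

theorem rk1_mem_Ucone (y : Fin N → ℝ) : rk1 m y ∈ Ucone m N :=
  subset_convexHull ℝ _ ⟨y, rfl⟩

theorem exists_eq_sum_smul_rk1_of_mem_Ucone {X : (Fin m → Fin N) → ℝ} (hX : X ∈ Ucone m N) :
    ∃ (ι : Type) (s : Finset ι) (w : ι → ℝ) (y : ι → Fin N → ℝ),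
      (∀ j ∈ s, 0 ≤ w j) ∧ X = ∑ j ∈ s, w j • rk1 m (y j) := by
  rw [Ucone, _root_.convexHull_eq] at hX
  obtain ⟨ι, s, w, Z, hw0, hw1, hZ, rfl⟩ := hX
  choose! y hy using hZ
  refine ⟨ι, s, w, y, hw0, ?_⟩
  rw [Finset.centerMass_eq_of_sum_1 _ _ hw1]
  exact Finset.sum_congr rfl fun j hj => by rw [hy j hj]

end Tensor

section KeyInequality

variable {n m : ℕ} {f : MvPolynomial (Fin n) ℝ} {F : (Fin m → Fin (n + 1)) → ℝ}

theorem evalHomogenization_diagRoot_le_tIP (hm : Even m) (hm0 : 0 < m)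
    (hdeg : f.totalDegree ≤ m) (hcoeff : EssNonposCoeff m f)
    (hF : ∀ x t, tIP F (rk1 m (Fin.snoc x t)) = evalHomogenization m f x t)
    {X : (Fin m → Fin (n + 1)) → ℝ} (hX : X ∈ Ucone m (n + 1)) :
    evalHomogenization m f (Fin.init (diagRoot m X)) (diagRoot m X (Fin.last n)) ≤ tIP F X := by
  obtain ⟨ι, s, w, y, hw, rfl⟩ := exists_eq_sum_smul_rk1_of_mem_Ucone hX
  have hdiag (c : Fin (n + 1)) : (∑ j ∈ s, w j • rk1 m (y j)) (fun _ => c) =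
      ∑ j ∈ s, w j * y j c ^ m := by
    simp only [Finset.sum_apply, Pi.smul_apply, smul_eq_mul, rk1_const]
  have hdiag_nonneg (c : Fin (n + 1)) : 0 ≤ ∑ j ∈ s, w j * y j c ^ m :=
    Finset.sum_nonneg fun j hj => mul_nonneg (hw j hj) (hm.pow_nonneg _)
  have htIP (j : ι) : tIP F (rk1 m (y j)) =
      evalHomogenization m f (Fin.init (y j)) (y j (Fin.last n)) := by
    rw [← hF, Fin.snoc_init_self]
  rw [tIP_sum_smul]
  simp_rw [htIP]
  refine evalHomogenization_le_sum_mul hm hm0 hdeg hcoeff s w hw y _ (fun c => ?_) fun c => ?_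
  · exact Real.rpow_nonneg ((hdiag c).symm ▸ hdiag_nonneg c) _
  · rw [diagRoot, hdiag, one_div, Real.rpow_inv_natCast_pow (hdiag_nonneg c) hm0.ne']

theorem eval_diagRoot_le_tIP (hm : Even m) (hm0 : 0 < m)
    (hdeg : f.totalDegree ≤ m) (hcoeff : EssNonposCoeff m f)
    (hF : ∀ x t, tIP F (rk1 m (Fin.snoc x t)) = evalHomogenization m f x t)
    {X : (Fin m → Fin (n + 1)) → ℝ} (hX : X ∈ Ucone m (n + 1))
    (hX1 : X (fun _ => Fin.last n) = 1) :
    eval (Fin.init (diagRoot m X)) f ≤ tIP F X := by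
  have hlast : diagRoot m X (Fin.last n) = 1 := by rw [diagRoot, hX1, Real.one_rpow]
  simpa only [hlast, evalHomogenization_one] using
    evalHomogenization_diagRoot_le_tIP hm hm0 hdeg hcoeff hF hX

end KeyInequality

theorem stmt15_general (n m p : ℕ) (hm : Even m) (hm0 : 0 < m)
    (f : Fin (p + 1) → MvPolynomial (Fin n) ℝ)
    (hdeg : ∀ l, (f l).totalDegree ≤ m)
    (hcoeff : ∀ l, EssNonposCoeff m (f l))
    (Ft : Fin (p + 1) → (Fin m → Fin (n + 1)) → ℝ)
    (hrep : ∀ l (x : Fin n → ℝ) (t : ℝ),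
      tIP (Ft l) (rk1 m (Fin.snoc x t)) =
        ∑ α ∈ (f l).support,
          (f l).coeff α * (∏ i : Fin n, x i ^ α i) * t ^ (m - ∑ i : Fin n, α i)) :
    sInf {y : ℝ | ∃ x : Fin n → ℝ,
        (∀ l : Fin p, MvPolynomial.eval x (f l.succ) ≤ 0) ∧ y = MvPolynomial.eval x (f 0)} =
      sInf {y : ℝ | ∃ X ∈ Ucone m (n + 1),
        (∀ l : Fin p, tIP (Ft l.succ) X ≤ 0) ∧ X (fun _ => Fin.last n) = 1 ∧
          y = tIP (Ft 0) X} ∧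
    ∀ X ∈ Ucone m (n + 1),
      (∀ l : Fin p, tIP (Ft l.succ) X ≤ 0) → X (fun _ => Fin.last n) = 1 →
      (∀ X' ∈ Ucone m (n + 1), (∀ l : Fin p, tIP (Ft l.succ) X' ≤ 0) →
        X' (fun _ => Fin.last n) = 1 → tIP (Ft 0) X ≤ tIP (Ft 0) X') →
      ((∀ l : Fin p, MvPolynomial.eval
          (fun i : Fin n => (X (fun _ => i.castSucc)) ^ ((1 : ℝ) / m)) (f l.succ) ≤ 0) ∧
        ∀ x : Fin n → ℝ, (∀ l : Fin p, MvPolynomial.eval x (f l.succ) ≤ 0) →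
          MvPolynomial.eval
            (fun i : Fin n => (X (fun _ => i.castSucc)) ^ ((1 : ℝ) / m)) (f 0) ≤
            MvPolynomial.eval x (f 0)) := by
  have hlift (l : Fin (p + 1)) (x : Fin n → ℝ) :
      tIP (Ft l) (rk1 m (Fin.snoc x 1)) = eval x (f l) :=
    (hrep l x 1).trans (evalHomogenization_one (f l) x)
  have hlift_last (x : Fin n → ℝ) : rk1 m (Fin.snoc x (1 : ℝ)) (fun _ => Fin.last n) = 1 := by
    simp [rk1_const]
  have hkey (l : Fin (p + 1)) {X} (hX : X ∈ Ucone m (n + 1)) (hX1 : X (fun _ => Fin.last n) = 1) :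
      eval (Fin.init (diagRoot m X)) (f l) ≤ tIP (Ft l) X :=
    eval_diagRoot_le_tIP hm hm0 (hdeg l) (hcoeff l) (hrep l) hX hX1
  refine ⟨csInf_eq_csInf_of_forall_exists_le ?_ ?_, fun X hX hXf hX1 hopt => ⟨?_, ?_⟩⟩
  · rintro _ ⟨x, hx, rfl⟩
    exact ⟨_, ⟨_, rk1_mem_Ucone _, fun l => (hlift _ x).trans_le (hx l), hlift_last x,
      (hlift 0 x).symm⟩, le_rfl⟩
  · rintro _ ⟨X, hX, hXf, hX1, rfl⟩
    exact ⟨_, ⟨_, fun l => (hkey l.succ hX hX1).trans (hXf l), rfl⟩, hkey 0 hX hX1⟩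
  · exact fun l => (hkey l.succ hX hX1).trans (hXf l)
  · intro x hx
    calc eval (Fin.init (diagRoot m X)) (f 0) ≤ tIP (Ft 0) X := hkey 0 hX hX1
      _ ≤ tIP (Ft 0) (rk1 m (Fin.snoc x 1)) :=
          hopt _ (rk1_mem_Ucone _) (fun l => (hlift _ x).trans_le (hx l)) (hlift_last x)
      _ = eval x (f 0) := hlift 0 x

/-- Exact conic relaxation for polynomial optimization with essentially
nonpositive coefficients. -/
theorem stmt15 (n m p : ℕ) (hm : Even m) (hm0 : 0 < m)
    (f : Fin (p + 1) → MvPolynomial (Fin n) ℝ)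
    (hdeg : ∀ l, (f l).totalDegree ≤ m)
    (hcoeff : ∀ l, EssNonposCoeff m (f l))
    (Ft : Fin (p + 1) → (Fin m → Fin (n + 1)) → ℝ)
    (hFs : ∀ l, TSymm (Ft l))
    (hrep : ∀ l (x : Fin n → ℝ) (t : ℝ),
      tIP (Ft l) (rk1 m (Fin.snoc x t)) =
        ∑ α ∈ (f l).support,
          (f l).coeff α * (∏ i : Fin n, x i ^ α i) * t ^ (m - ∑ i : Fin n, α i))
    (hfeas : ∃ x : Fin n → ℝ, ∀ l : Fin p, MvPolynomial.eval x (f l.succ) ≤ 0) :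
    sInf {y : ℝ | ∃ x : Fin n → ℝ,
        (∀ l : Fin p, MvPolynomial.eval x (f l.succ) ≤ 0) ∧ y = MvPolynomial.eval x (f 0)} =
      sInf {y : ℝ | ∃ X ∈ Ucone m (n + 1),
        (∀ l : Fin p, tIP (Ft l.succ) X ≤ 0) ∧ X (fun _ => Fin.last n) = 1 ∧
          y = tIP (Ft 0) X} ∧
    ∀ X ∈ Ucone m (n + 1),
      (∀ l : Fin p, tIP (Ft l.succ) X ≤ 0) → X (fun _ => Fin.last n) = 1 →
      (∀ X' ∈ Ucone m (n + 1), (∀ l : Fin p, tIP (Ft l.succ) X' ≤ 0) →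
        X' (fun _ => Fin.last n) = 1 → tIP (Ft 0) X ≤ tIP (Ft 0) X') →
      ((∀ l : Fin p, MvPolynomial.eval
          (fun i : Fin n => (X (fun _ => i.castSucc)) ^ ((1 : ℝ) / m)) (f l.succ) ≤ 0) ∧
        ∀ x : Fin n → ℝ, (∀ l : Fin p, MvPolynomial.eval x (f l.succ) ≤ 0) →
          MvPolynomial.eval
            (fun i : Fin n => (X (fun _ => i.castSucc)) ^ ((1 : ℝ) / m)) (f 0) ≤
            MvPolynomial.eval x (f 0)) :=
  stmt15_general n m p hm hm0 f hdeg hcoeff Ft hrep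
end
end

section
/- Let f_0(x₁,x₂,x₃) = x₁⁶ + x₂⁶ + x₃⁶ − (x₁²(x₂⁴+x₃⁴) + x₂²(x₁⁴+x₃⁴) + x₃²(x₁⁴+x₂⁴)). Then the minimum of f_0 over the set {x ∈ ℝ³ : x₁⁶ + x₂⁶ + x₃⁶ ≤ 1} equals −1, attained at x₁ = x₂ = x₃ = (1/3)^{1/6}. -/
open Finset MvPolynomial

noncomputable section

lemma schur_aux18 (a b c : ℝ) (ha : 0 ≤ a) (hb : 0 ≤ b) (hc : 0 ≤ c) :
    0 ≤ a*(a-b)*(a-c) + b*(b-a)*(b-c) + c*(c-a)*(c-b) := by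
  rcases le_total a b with h1 | h1 <;> rcases le_total b c with h2 | h2 <;>
    rcases le_total a c with h3 | h3 <;>
    nlinarith [mul_nonneg (sub_nonneg.2 h1) (sub_nonneg.2 h2),
      mul_nonneg ha hb, mul_nonneg hb hc, mul_nonneg ha hc,
      sq_nonneg (a-b), sq_nonneg (b-c), sq_nonneg (a-c)]

lemma cpow_aux18 : (((1/3:ℝ) ^ ((1:ℝ)/6)) ^ 6) = 1/3 := by
  rw [← Real.rpow_natCast ((1/3:ℝ)^((1:ℝ)/6)) 6, ← Real.rpow_mul (by norm_num)]
  norm_num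

/-- The minimum of the Robinson-type polynomial over the `l^6` ball equals −1,
attained at `x₁ = x₂ = x₃ = (1/3)^{1/6}`. -/
theorem stmt18 :
    (∀ x1 x2 x3 : ℝ, x1 ^ 6 + x2 ^ 6 + x3 ^ 6 ≤ 1 →
      -1 ≤ x1 ^ 6 + x2 ^ 6 + x3 ^ 6 -
        (x1 ^ 2 * (x2 ^ 4 + x3 ^ 4) + x2 ^ 2 * (x1 ^ 4 + x3 ^ 4) +
          x3 ^ 2 * (x1 ^ 4 + x2 ^ 4))) ∧
    (((1 / 3 : ℝ) ^ ((1 : ℝ) / 6)) ^ 6 + ((1 / 3 : ℝ) ^ ((1 : ℝ) / 6)) ^ 6 +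
        ((1 / 3 : ℝ) ^ ((1 : ℝ) / 6)) ^ 6 ≤ 1) ∧
    (let c : ℝ := (1 / 3 : ℝ) ^ ((1 : ℝ) / 6);
      c ^ 6 + c ^ 6 + c ^ 6 -
        (c ^ 2 * (c ^ 4 + c ^ 4) + c ^ 2 * (c ^ 4 + c ^ 4) +
          c ^ 2 * (c ^ 4 + c ^ 4)) = -1) := by
  refine ⟨?_, ?_, ?_⟩
  · intro x y z h
    have hs := schur_aux18 (x^2) (y^2) (z^2) (sq_nonneg x) (sq_nonneg y) (sq_nonneg z)
    have ham : 3*x^2*y^2*z^2 ≤ x^6 + y^6 + z^6 := by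
      nlinarith [sq_nonneg (x^2-y^2), sq_nonneg (y^2-z^2), sq_nonneg (x^2-z^2),
        sq_nonneg x, sq_nonneg y, sq_nonneg z]
    nlinarith [hs, ham]
  · rw [cpow_aux18]; norm_num
  · intro c
    show c ^ 6 + c ^ 6 + c ^ 6 - _ = -1
    have : c ^ 6 = 1/3 := cpow_aux18
    have hc2 : c ^ 2 * c ^ 4 = c ^ 6 := by ring
    nlinarith [this, hc2]
end
end
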